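/- For each subset X of {1,...,n}, the set Nil(X) of elements of the Kiselman semigroup K_n with content exactly X is a subsemigroup that is nilpotent with zero element e_X, of nilpotency class |X| when X is nonempty (and class 1 when X = ∅); and K_n is the disjoint union of the Nil(X) over all subsets X. -/

import Mathlib

/-- The defining relations of the Kiselman semigroup `K_n`:
`aᵢ² = aᵢ`, and `aᵢaⱼaᵢ = aⱼaᵢaⱼ = aⱼaᵢ` for `i < j`. -/
inductive KisRel (n : ℕ) : FreeMonoid (Fin n) → FreeMonoid (Fin n) → Prop
  | idem (i : Fin n) : KisRel n (.of i * .of i) (.of i)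
  | braid₁ {i j : Fin n} (h : i < j) :
      KisRel n (.of i * .of j * .of i) (.of j * .of i)
  | braid₂ {i j : Fin n} (h : i < j) :
      KisRel n (.of j * .of i * .of j) (.of j * .of i)

/-- The Kiselman semigroup (monoid) `K_n`. -/
abbrev Kiselman (n : ℕ) := PresentedMonoid (KisRel n)

/-- The canonical projection from the free monoid on the generators to `K_n`. -/
def kmk (n : ℕ) : FreeMonoid (Fin n) →* Kiselman n := PresentedMonoid.mk (KisRel n)

/-- The generator `a_{i+1}` (0-indexed: `ka i` is the paper's `a_{i+1}`). -/
def ka {n : ℕ} (i : Fin n) : Kiselman n := PresentedMonoid.of (KisRel n) i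

/-- The idempotent `e_X`: the product of the generators indexed by `X` in strictly
decreasing order of indices. -/
def eX {n : ℕ} (X : Finset (Fin n)) : Kiselman n :=
  kmk n (FreeMonoid.ofList ((X.sort (· ≤ ·)).reverse))

/-! `e_X = a_{x_k} ⋯ a_{x_1}` (indices decreasing) absorbs every `a_i`, `i ∈ X`, on both sides,
because `a_m z a_m = z a_m` whenever every letter of `z` exceeds `m`. For the same reason, in a
product of `|X|` words of content `X`, every `a_m` (`m = min X`) standing before an occurrence of
`a_m` in the last word can be deleted; by induction the first `|X| - 1` words with `m` deleted
multiply to `e_{X \ m}`, and `e_{X \ m} a_m = e_X` absorbs the rest.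

For sharpness let `a_i` act on `ℕⁿ` by setting coordinate `i` to one more than the maximum of the
coordinates below `i`. Starting from `0`, `e_X` lifts coordinate `max X` to `|X|`, whereas each
factor `a_{x_1} ⋯ a_{x_k}` raises the largest coordinate by at most one. -/

theorem Finset.sort_insert_of_forall_lt {α : Type*} [LinearOrder α] {s : Finset α} {a : α}
    (h : ∀ x ∈ s, x < a) : (insert a s).sort (· ≤ ·) = s.sort (· ≤ ·) ++ [a] := by
  refine (Finset.sortedLT_sort _).eq_of_mem_iff (List.Pairwise.sortedLT ?_) (by simp [or_comm])
  exact List.pairwise_append.2 ⟨(Finset.sortedLT_sort s).pairwise, by simp, by simpa using h⟩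

theorem List.toFinset_filter_ne {α : Type*} [DecidableEq α] (l : List α) (a : α) :
    (l.filter (· ≠ a)).toFinset = l.toFinset.erase a := by
  rw [List.toFinset_filter]
  simpa using Finset.filter_ne' l.toFinset a

namespace Kiselman

variable {n : ℕ}

open Function

def word (l : List (Fin n)) : Kiselman n := (l.map ka).prod

@[simp] lemma word_nil : word ([] : List (Fin n)) = 1 := rfl

@[simp] lemma word_cons (i : Fin n) (l : List (Fin n)) : word (i :: l) = ka i * word l :=
  List.prod_cons

@[simp] lemma word_append (l₁ l₂ : List (Fin n)) : word (l₁ ++ l₂) = word l₁ * word l₂ := by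
  simp [word]

lemma word_singleton (i : Fin n) : word [i] = ka i := mul_one _

lemma kmk_ofList (l : List (Fin n)) : kmk n (FreeMonoid.ofList l) = word l := by
  induction l with
  | nil => rfl
  | cons i l ih => rw [FreeMonoid.ofList_cons, map_mul, ih, word_cons]; rfl

lemma word_surjective : Surjective (word : List (Fin n) → Kiselman n) := fun x => by
  obtain ⟨w, rfl⟩ := PresentedMonoid.surjective_mk x
  exact ⟨w.toList, by rw [← kmk_ofList, FreeMonoid.ofList_toList]; rfl⟩

lemma prod_map_word (ws : List (List (Fin n))) : (ws.map word).prod = word ws.flatten := by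
  induction ws with
  | nil => rfl
  | cons w ws ih => simp [ih]

lemma eX_eq_word (X : Finset (Fin n)) : eX X = word (X.sort (· ≤ ·)).reverse :=
  kmk_ofList _

lemma ka_mul_self (i : Fin n) : ka i * ka i = ka i :=
  PresentedMonoid.mk_eq_mk_of_rel (KisRel.idem i)

lemma ka_mul_ka_mul_ka_of_lt {i j : Fin n} (h : i < j) : ka i * ka j * ka i = ka j * ka i :=
  PresentedMonoid.mk_eq_mk_of_rel (KisRel.braid₁ h)

lemma ka_mul_ka_mul_ka_of_gt {i j : Fin n} (h : j < i) : ka i * ka j * ka i = ka i * ka j :=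
  PresentedMonoid.mk_eq_mk_of_rel (KisRel.braid₂ h)

lemma ka_mul_word_mul_ka {m : Fin n} {z : List (Fin n)} (hz : ∀ x ∈ z, m < x) :
    ka m * word z * ka m = word z * ka m := by
  induction z using List.reverseRecOn with
  | nil => simp [ka_mul_self]
  | append_singleton z j ih =>
    have hj : m < j := hz j (by simp)
    have ih := ih fun x hx => hz x (by simp [hx])
    calc ka m * word (z ++ [j]) * ka m
        = ka m * word z * (ka m * ka j * ka m) := by
          simp [ka_mul_ka_mul_ka_of_lt hj, mul_assoc]
      _ = word z * (ka m * ka j * ka m) := by simp only [← mul_assoc, ih]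
      _ = word (z ++ [j]) * ka m := by
          rw [ka_mul_ka_mul_ka_of_lt hj]; simp [mul_assoc]

lemma word_mul_ka_eq_filter {m : Fin n} {u : List (Fin n)} (hu : ∀ x ∈ u, m ≤ x) :
    word u * ka m = word (u.filter (· ≠ m)) * ka m := by
  induction u with
  | nil => rfl
  | cons a u ih =>
    have ih := ih fun x hx => hu x (by simp [hx])
    by_cases ha : a = m
    · subst ha
      have hgt : ∀ x ∈ u.filter (· ≠ a), a < x := fun x hx => by
        simp only [List.mem_filter, decide_eq_true_eq] at hx
        exact (hu x (by simp [hx.1])).lt_of_ne' hx.2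
      have hfilter : (a :: u).filter (· ≠ a) = u.filter (· ≠ a) := by simp
      rw [hfilter, word_cons, mul_assoc, ih, ← mul_assoc, ka_mul_word_mul_ka hgt]
    · have hfilter : (a :: u).filter (· ≠ m) = a :: u.filter (· ≠ m) := by simp [ha]
      rw [hfilter, word_cons, word_cons, mul_assoc, ih, mul_assoc]

lemma eX_empty : eX (∅ : Finset (Fin n)) = 1 := by
  rw [eX_eq_word, Finset.sort_empty]; rfl

lemma eX_insert_of_lt {m : Fin n} {s : Finset (Fin n)} (h : ∀ x ∈ s, m < x) :
    eX (insert m s) = eX s * ka m := by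
  rw [eX_eq_word, eX_eq_word, Finset.sort_insert _ (fun x hx => (h x hx).le)
    (fun hm => lt_irrefl m (h m hm))]
  simp

lemma eX_insert_of_gt {a : Fin n} {s : Finset (Fin n)} (h : ∀ x ∈ s, x < a) :
    eX (insert a s) = ka a * eX s := by
  rw [eX_eq_word, eX_eq_word, Finset.sort_insert_of_forall_lt h]
  simp

lemma eX_mul_ka {X : Finset (Fin n)} {i : Fin n} (hi : i ∈ X) : eX X * ka i = eX X := by
  induction X using Finset.induction_on_min with
  | empty => simp at hi
  | insert m s hs ih =>
    rw [eX_insert_of_lt hs]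
    rcases Finset.mem_insert.mp hi with rfl | hi
    · rw [mul_assoc, ka_mul_self]
    · calc eX s * ka m * ka i = eX s * ka i * ka m * ka i := by rw [ih hi]
        _ = eX s * (ka i * ka m * ka i) := by simp only [mul_assoc]
        _ = eX s * ka i * ka m := by rw [ka_mul_ka_mul_ka_of_gt (hs i hi), mul_assoc]
        _ = eX s * ka m := by rw [ih hi]

lemma ka_mul_eX {X : Finset (Fin n)} {i : Fin n} (hi : i ∈ X) : ka i * eX X = eX X := by
  induction X using Finset.induction_on_min with
  | empty => simp at hi
  | insert m s hs ih =>
    rw [eX_insert_of_lt hs]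
    rcases Finset.mem_insert.mp hi with rfl | hi
    · rw [← mul_assoc, eX_eq_word, ka_mul_word_mul_ka (by simpa using hs)]
    · rw [← mul_assoc, ih hi]

lemma eX_mul_word {X : Finset (Fin n)} {u : List (Fin n)} (hu : ∀ x ∈ u, x ∈ X) :
    eX X * word u = eX X := by
  induction u using List.reverseRecOn with
  | nil => simp
  | append_singleton u i ih =>
    rw [word_append, word_singleton, ← mul_assoc, ih fun x hx => hu x (by simp [hx]),
      eX_mul_ka (hu i (by simp))]

lemma word_mul_eX {X : Finset (Fin n)} {u : List (Fin n)} (hu : ∀ x ∈ u, x ∈ X) :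
    word u * eX X = eX X := by
  induction u with
  | nil => simp
  | cons i u ih =>
    rw [word_cons, mul_assoc, ih fun x hx => hu x (by simp [hx]), ka_mul_eX (hu i (by simp))]

lemma word_flatten_eq_eX {X : Finset (Fin n)} {ws : List (List (Fin n))}
    (hws : ∀ w ∈ ws, w.toFinset = X) (hlen : X.card ≤ ws.length) : word ws.flatten = eX X := by
  induction X using Finset.induction_on_min generalizing ws with
  | empty =>
    have hnil : ws.flatten = [] := List.flatten_eq_nil_iff.2 fun w hw =>
      (List.toFinset_eq_empty_iff w).1 (hws w hw)
    rw [hnil, eX_empty, word_nil]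
  | insert m s hs ih =>
    have hm : m ∉ s := fun h => lt_irrefl m (hs m h)
    obtain ⟨ws, w, rfl⟩ : ∃ ws' w, ws = ws' ++ [w] :=
      (ws.eq_nil_or_concat').resolve_left fun h => by simp [h] at hlen
    have hwX : w.toFinset = insert m s := hws w (by simp)
    obtain ⟨p, v, rfl⟩ := List.append_of_mem (show m ∈ w by simp [← List.mem_toFinset, hwX])
    have hflat : (ws ++ [p ++ m :: v]).flatten = ws.flatten ++ p ++ m :: v := by simp
    have hletters : ∀ x ∈ ws.flatten ++ p ++ m :: v, x ∈ insert m s := fun x hx => by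
      rw [← hflat] at hx
      obtain ⟨w', hw', hx⟩ := List.mem_flatten.1 hx
      exact hws w' hw' ▸ List.mem_toFinset.2 hx
    have hge : ∀ x ∈ ws.flatten ++ p, m ≤ x := fun x hx => by
      rcases Finset.mem_insert.1 (hletters x (List.mem_append_left _ hx)) with rfl | hx
      exacts [le_rfl, (hs x hx).le]
    have hp : ∀ x ∈ p.filter (· ≠ m), x ∈ s := fun x hx => by
      simp only [List.mem_filter, decide_eq_true_eq] at hx
      refine (Finset.mem_insert.1 (hletters x ?_)).resolve_left hx.2
      exact List.mem_append_left _ (List.mem_append_right _ hx.1)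
    have hIH : word (ws.map (·.filter (· ≠ m))).flatten = eX s := by
      refine ih (fun w' hw' => ?_) (by simpa [Finset.card_insert_of_notMem hm] using hlen)
      obtain ⟨w', hw'', rfl⟩ := List.mem_map.1 hw'
      rw [List.toFinset_filter_ne, hws w' (List.mem_append_left _ hw''), Finset.erase_insert hm]
    calc word (ws ++ [p ++ m :: v]).flatten = word (ws.flatten ++ p) * ka m * word v := by
          rw [hflat]; simp [mul_assoc]
      _ = word ((ws.flatten ++ p).filter (· ≠ m)) * ka m * word v := by
          rw [word_mul_ka_eq_filter hge]
      _ = eX s * word (p.filter (· ≠ m)) * ka m * word v := by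
          rw [List.filter_append, List.filter_flatten, word_append, hIH]
      _ = eX (insert m s) := by
          rw [eX_mul_word hp, ← eX_insert_of_lt hs, eX_mul_word fun x hx =>
            hletters x (List.mem_append_right _ (List.mem_cons_of_mem _ hx))]

def raise (i : Fin n) : Function.End (Fin n → ℕ) :=
  fun v => update v i ((Finset.Iio i).sup v + 1)

lemma raise_apply (i : Fin n) (v : Fin n → ℕ) :
    raise i v = update v i ((Finset.Iio i).sup v + 1) := rfl

lemma sup_Iio_update_of_le {i j : Fin n} (h : i ≤ j) (v : Fin n → ℕ) (x : ℕ) :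
    (Finset.Iio i).sup (update v j x) = (Finset.Iio i).sup v :=
  Finset.sup_congr rfl fun _ ha => update_of_ne ((Finset.mem_Iio.1 ha).trans_le h).ne _ _

lemma raise_update_self (i : Fin n) (v : Fin n → ℕ) (x : ℕ) :
    raise i (update v i x) = raise i v := by
  rw [raise_apply, raise_apply, sup_Iio_update_of_le le_rfl, update_idem]

lemma raise_update_of_lt {i j : Fin n} (h : i < j) (v : Fin n → ℕ) (x : ℕ) :
    raise i (update v j x) = update (raise i v) j x := by
  rw [raise_apply, raise_apply, sup_Iio_update_of_le h.le, update_comm h.ne']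

lemma raise_raise_self (i : Fin n) (v : Fin n → ℕ) : raise i (raise i v) = raise i v :=
  raise_update_self i v _

def heightAction : Kiselman n →* Function.End (Fin n → ℕ) :=
  PresentedMonoid.lift raise fun a b h => by
    cases h with
    | idem i =>
      funext v
      exact raise_raise_self i v
    | @braid₁ i j h =>
      funext v
      change raise i (raise j (raise i v)) = raise j (raise i v)
      rw [raise_apply j, raise_update_of_lt h, raise_raise_self]
    | @braid₂ i j h =>
      funext v
      change raise j (raise i (raise j v)) = raise j (raise i v)
      rw [raise_apply j v, raise_update_of_lt h, raise_update_self]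

lemma heightAction_ka (i : Fin n) : heightAction (ka i) = raise i := rfl

lemma heightAction_mul_apply (g h : Kiselman n) (v : Fin n → ℕ) :
    heightAction (g * h) v = heightAction g (heightAction h v) := by
  rw [map_mul]; rfl

lemma heightAction_word_apply_of_notMem {l : List (Fin n)} {a : Fin n} (ha : a ∉ l)
    (v : Fin n → ℕ) : heightAction (word l) v a = v a := by
  induction l with
  | nil => rfl
  | cons i l ih =>
    rw [List.mem_cons, not_or] at ha
    rw [word_cons, heightAction_mul_apply, heightAction_ka, raise_apply, update_of_ne ha.1, ih ha.2]

lemma heightAction_word_apply_le {l : List (Fin n)} (hl : l.Pairwise (· ≤ ·)) {v : Fin n → ℕ}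
    {c : ℕ} (hv : ∀ t, v t ≤ c) (t : Fin n) : heightAction (word l) v t ≤ c + 1 := by
  induction l with
  | nil => exact (hv t).trans c.le_succ
  | cons i l ih =>
    obtain ⟨hi, hl⟩ := List.pairwise_cons.1 hl
    rw [word_cons, heightAction_mul_apply, heightAction_ka, raise_apply]
    rcases eq_or_ne t i with rfl | hti
    · rw [update_self, add_le_add_iff_right]
      refine Finset.sup_le fun a ha => ?_
      have hal : a ∉ l := fun h => (Finset.mem_Iio.1 ha).not_ge (hi a h)
      exact (heightAction_word_apply_of_notMem hal v).trans_le (hv a)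
    · rw [update_of_ne hti]
      exact ih hl

lemma card_le_heightAction_eX_max' {X : Finset (Fin n)} (hX : X.Nonempty) (v : Fin n → ℕ) :
    X.card ≤ heightAction (eX X) v (X.max' hX) := by
  induction X using Finset.induction_on_max with
  | empty => simp at hX
  | insert a s hs ih =>
    have hmax : (insert a s).max' hX = a :=
      le_antisymm (Finset.max'_le _ _ _ fun x hx => (Finset.mem_insert.1 hx).elim le_of_eq
        fun hx => (hs x hx).le) (Finset.le_max' _ _ (Finset.mem_insert_self a s))
    rw [eX_insert_of_gt hs, hmax, heightAction_mul_apply, heightAction_ka, raise_apply,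
      update_self, Finset.card_insert_of_notMem fun h => lt_irrefl a (hs a h),
      add_le_add_iff_right]
    rcases s.eq_empty_or_nonempty with rfl | hs'
    · simp
    · exact (ih hs').trans (Finset.le_sup (Finset.mem_Iio.2 (hs _ (s.max'_mem hs'))))

lemma word_sort_pow_ne_eX {X : Finset (Fin n)} (hX : X.Nonempty) :
    word (X.sort (· ≤ ·)) ^ (X.card - 1) ≠ eX X := by
  intro h
  have hpow : ∀ k t, heightAction (word (X.sort (· ≤ ·)) ^ k) 0 t ≤ k := by
    intro k
    induction k with
    | zero => intro t; rw [pow_zero, map_one]; exact le_rfl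
    | succ k ih =>
      intro t
      rw [pow_succ', heightAction_mul_apply]
      exact heightAction_word_apply_le (Finset.pairwise_sort _ _) ih t
  have hcard := (card_le_heightAction_eX_max' hX 0).trans (h ▸ hpow _ _)
  have hpos := hX.card_pos
  omega

end Kiselman

/-- Theorem 5: for the content map `c` on `K_n`, the set `Nil(X) = {x : c x = X}` is a
subsemigroup with zero element `e_X`, nilpotent of class `|X|` (class 1 for `X = ∅`):
every product of at least `|X|` elements of `Nil(X)` equals `e_X`, and for nonempty `X`
some product of `|X| - 1` elements of `Nil(X)` differs from `e_X`. Moreover `K_n` is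
the disjoint union of the `Nil(X)` (each `x` lies in `Nil(X)` exactly for `X = c x`). -/
theorem kiselman_nilpotent_subsemigroups (n : ℕ)
    (c : Kiselman n → Finset (Fin n))
    (hc : ∀ w : FreeMonoid (Fin n), c (kmk n w) = w.toList.toFinset)
    (X : Finset (Fin n)) :
    (∀ x y : Kiselman n, c x = X → c y = X → c (x * y) = X) ∧
    c (eX X) = X ∧
    (∀ x : Kiselman n, c x = X → x * eX X = eX X ∧ eX X * x = eX X) ∧
    (∀ l : List (Kiselman n), (∀ x ∈ l, c x = X) → X.card ≤ l.length →
      l.prod = eX X) ∧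
    (X.Nonempty → ∃ l : List (Kiselman n), (∀ x ∈ l, c x = X) ∧
      l.length = X.card - 1 ∧ l.prod ≠ eX X) ∧
    (∀ x : Kiselman n, ∃! Y : Finset (Fin n), c x = Y) := by
  open Kiselman in
  have hcw (l : List (Fin n)) : c (word l) = l.toFinset := by
    rw [← kmk_ofList, hc, FreeMonoid.toList_ofList]
  refine ⟨?_, ?_, ?_, ?_, ?_, fun x => ⟨c x, rfl, fun Y hY => hY.symm⟩⟩
  · intro x y hx hy
    obtain ⟨u, rfl⟩ := word_surjective x
    obtain ⟨w, rfl⟩ := word_surjective y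
    rw [hcw] at hx hy
    rw [← word_append, hcw, List.toFinset_append, hx, hy, Finset.union_self]
  · rw [eX_eq_word, hcw, List.toFinset_reverse, Finset.sort_toFinset]
  · intro x hx
    obtain ⟨u, rfl⟩ := word_surjective x
    have hu : ∀ i ∈ u, i ∈ X := fun i hi => by simpa [← hx, hcw] using hi
    exact ⟨word_mul_eX hu, eX_mul_word hu⟩
  · intro l hl hlen
    obtain ⟨ws, rfl⟩ := List.map_surjective_iff.2 word_surjective l
    rw [prod_map_word]
    refine word_flatten_eq_eX (fun w hw => ?_) (by simpa using hlen)
    rw [← hcw]; exact hl _ (List.mem_map_of_mem hw)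
  · intro hX
    refine ⟨List.replicate (X.card - 1) (word (X.sort (· ≤ ·))), fun x hx => ?_,
      List.length_replicate, by rw [List.prod_replicate]; exact word_sort_pow_ne_eX hX⟩
    rw [List.eq_of_mem_replicate hx, hcw, Finset.sort_toFinset]
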